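/- For λ = 3·(3π)^{2/5}/4, the function u*(x) = sqrt(2/(x² + (4/3)λ)) satisfies ∫_ℝ u*(x)^6 dx = 1 and the ODE -u*'' + (u*)³ - λ(u*)⁵ = 0, and moreover (1/2)∫_ℝ (u*')² dx + (1/4)∫_ℝ (u*)⁴ dx = (5/18)λ. -/

import Mathlib

open MeasureTheory Real

noncomputable def lam : ℝ := 3 * (3 * Real.pi) ^ ((2 : ℝ) / 5) / 4

noncomputable def ustar (x : ℝ) : ℝ := Real.sqrt (2 / (x ^ 2 + (4 / 3) * lam))

/-!
With `κ = (3π)^(1/5)` one has `(4/3)λ = κ²`, so `u*² = 2 / (x² + κ²)` and `u*' = -x u*³ / 2`;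
the equation `-u*'' + u*³ - λ u*⁵ = 0` is then an algebraic identity. After the scaling
`x = κ t` and the substitution `t = tan θ`, each integral becomes a multiple of
`∫_{-π/2}^{π/2} cos^{2n} θ dθ`, which is `π/2` for `n = 1` and `3π/8` for `n = 2`;
the normalisation `∫ u*⁶ = 1` is exactly `κ⁵ = 3π`.
-/

open Filter Topology

theorem integrable_inv_one_add_sq_pow (n : ℕ) :
    Integrable fun x : ℝ => ((1 + x ^ 2) ^ (n + 1))⁻¹ := by
  refine integrable_inv_one_add_sq.mono' (by fun_prop) (ae_of_all _ fun x => ?_)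
  have h1 : 1 ≤ 1 + x ^ 2 := le_add_of_nonneg_right (sq_nonneg x)
  rw [norm_inv, norm_pow, Real.norm_of_nonneg (by positivity)]
  exact inv_anti₀ (by positivity) (le_self_pow₀ h1 n.succ_ne_zero)

theorem integral_inv_one_add_sq_pow (n : ℕ) :
    ∫ x : ℝ, ((1 + x ^ 2) ^ (n + 1))⁻¹ = ∫ θ in -(π / 2)..π / 2, cos θ ^ (2 * n) := by
  set F : ℝ → ℝ := fun t => ∫ θ in -(π / 2)..t, cos θ ^ (2 * n)
  have hcont : Continuous fun θ : ℝ => cos θ ^ (2 * n) := by fun_prop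
  have hF : Continuous F := intervalIntegral.continuous_primitive (hcont.intervalIntegrable) _
  have hderiv (x : ℝ) : HasDerivAt (F ∘ arctan) ((1 + x ^ 2) ^ (n + 1))⁻¹ x := by
    refine ((hcont.integral_hasStrictDerivAt (-(π / 2)) (arctan x)).hasDerivAt.comp x
      (hasDerivAt_arctan' x)).congr_deriv ?_
    rw [pow_mul, cos_sq_arctan, one_div, inv_pow, ← mul_inv, ← pow_succ]
  have htop : Tendsto (F ∘ arctan) atTop (𝓝 (F (π / 2))) :=
    (hF.tendsto _).comp (tendsto_nhds_of_tendsto_nhdsWithin tendsto_arctan_atTop)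
  have hbot : Tendsto (F ∘ arctan) atBot (𝓝 (F (-(π / 2)))) :=
    (hF.tendsto _).comp (tendsto_nhds_of_tendsto_nhdsWithin tendsto_arctan_atBot)
  rw [integral_of_hasDerivAt_of_tendsto hderiv (integrable_inv_one_add_sq_pow n) hbot htop]
  simp [F]

theorem inv_sq_add_sq_pow_eq (n : ℕ) {c : ℝ} (hc : c ≠ 0) (x : ℝ) :
    ((x ^ 2 + c ^ 2) ^ n)⁻¹ = (c ^ (2 * n))⁻¹ * ((1 + (x / c) ^ 2) ^ n)⁻¹ := by
  rw [← mul_inv, pow_mul, ← mul_pow]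
  congr 2
  field_simp
  ring

theorem integrable_inv_sq_add_sq_pow (n : ℕ) {c : ℝ} (hc : c ≠ 0) :
    Integrable fun x : ℝ => ((x ^ 2 + c ^ 2) ^ (n + 1))⁻¹ := by
  simp_rw [inv_sq_add_sq_pow_eq _ hc]
  exact ((integrable_inv_one_add_sq_pow n).comp_div hc).const_mul _

theorem integral_inv_sq_add_sq_pow (n : ℕ) {c : ℝ} (hc : 0 < c) :
    ∫ x : ℝ, ((x ^ 2 + c ^ 2) ^ (n + 1))⁻¹
      = (c ^ (2 * n + 1))⁻¹ * ∫ θ in -(π / 2)..π / 2, cos θ ^ (2 * n) := by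
  simp_rw [inv_sq_add_sq_pow_eq _ hc.ne']
  rw [integral_const_mul, Measure.integral_comp_div (fun y => ((1 + y ^ 2) ^ (n + 1))⁻¹),
    integral_inv_one_add_sq_pow, abs_of_pos hc, smul_eq_mul, ← mul_assoc]
  congr 1
  field_simp
  ring

theorem integral_cos_sq_neg_pi_div_two :
    ∫ θ in -(π / 2)..π / 2, cos θ ^ 2 = π / 2 := by
  simp [integral_cos_sq]

theorem integral_cos_pow_four_neg_pi_div_two :
    ∫ θ in -(π / 2)..π / 2, cos θ ^ 4 = 3 * π / 8 := by
  rw [integral_cos_pow (n := 2), integral_cos_sq_neg_pi_div_two]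
  norm_num
  ring

noncomputable def kappa : ℝ := (3 * π) ^ ((1 : ℝ) / 5)

theorem kappa_pos : 0 < kappa := by unfold kappa; positivity

theorem kappa_pow_five : kappa ^ 5 = 3 * π := by
  rw [kappa, ← rpow_natCast, ← rpow_mul (by positivity)]
  norm_num

theorem lam_eq : lam = 3 / 4 * kappa ^ 2 := by
  rw [lam, kappa, ← rpow_natCast, ← rpow_mul (by positivity)]
  norm_num
  ring

theorem sq_add_kappa_sq_pos (x : ℝ) : 0 < x ^ 2 + kappa ^ 2 := by
  have := kappa_pos; positivity

theorem ustar_eq (x : ℝ) : ustar x = √(2 / (x ^ 2 + kappa ^ 2)) := by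
  rw [ustar, lam_eq]; ring_nf

theorem ustar_sq (x : ℝ) : ustar x ^ 2 = 2 / (x ^ 2 + kappa ^ 2) := by
  rw [ustar_eq, sq_sqrt (div_pos two_pos (sq_add_kappa_sq_pos x)).le]

theorem ustar_sq_mul (x : ℝ) : ustar x ^ 2 * (x ^ 2 + kappa ^ 2) = 2 := by
  rw [ustar_sq, div_mul_cancel₀ _ (sq_add_kappa_sq_pos x).ne']

theorem ustar_pos (x : ℝ) : 0 < ustar x := by
  rw [ustar_eq]; exact sqrt_pos.2 (div_pos two_pos (sq_add_kappa_sq_pos x))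

theorem hasDerivAt_ustar (x : ℝ) : HasDerivAt ustar (-(x * ustar x ^ 3) / 2) x := by
  have hpos := sq_add_kappa_sq_pos x
  have hg :=
    (hasDerivAt_const x (2 : ℝ)).div ((hasDerivAt_pow 2 x).add_const (kappa ^ 2)) hpos.ne'
  rw [show ustar = fun y => √(2 / (y ^ 2 + kappa ^ 2)) from funext ustar_eq]
  refine (hg.sqrt (div_pos two_pos hpos).ne').congr_deriv ?_
  simp only [Pi.div_apply, ← ustar_eq]
  have hu := ustar_sq_mul x
  have := (ustar_pos x).ne'
  field_simp
  linear_combination x * (ustar x ^ 2 * (x ^ 2 + kappa ^ 2) + 2) * hu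

theorem deriv_ustar : deriv ustar = fun x => -(x * ustar x ^ 3) / 2 :=
  funext fun x => (hasDerivAt_ustar x).deriv

theorem hasDerivAt_deriv_ustar (x : ℝ) :
    HasDerivAt (deriv ustar) (3 / 4 * x ^ 2 * ustar x ^ 5 - ustar x ^ 3 / 2) x := by
  rw [deriv_ustar]
  refine (((hasDerivAt_id x).mul ((hasDerivAt_ustar x).pow 3)).neg.div_const 2).congr_deriv ?_
  simp only [id, Pi.pow_apply]
  ring

theorem ustar_ode (x : ℝ) :
    -(deriv (deriv ustar) x) + ustar x ^ 3 - lam * ustar x ^ 5 = 0 := by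
  rw [(hasDerivAt_deriv_ustar x).deriv, lam_eq]
  linear_combination (-(3 / 4) * ustar x ^ 3) * ustar_sq_mul x

theorem ustar_pow_four (x : ℝ) : ustar x ^ 4 = 4 * ((x ^ 2 + kappa ^ 2) ^ 2)⁻¹ := by
  rw [show ustar x ^ 4 = (ustar x ^ 2) ^ 2 by ring, ustar_sq, div_pow]
  ring

theorem ustar_pow_six (x : ℝ) : ustar x ^ 6 = 8 * ((x ^ 2 + kappa ^ 2) ^ 3)⁻¹ := by
  rw [show ustar x ^ 6 = (ustar x ^ 2) ^ 3 by ring, ustar_sq, div_pow]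
  ring

theorem deriv_ustar_sq (x : ℝ) :
    deriv ustar x ^ 2
      = 2 * ((x ^ 2 + kappa ^ 2) ^ 2)⁻¹ - 2 * kappa ^ 2 * ((x ^ 2 + kappa ^ 2) ^ 3)⁻¹ := by
  rw [deriv_ustar]
  have := (sq_add_kappa_sq_pos x).ne'
  rw [show (-(x * ustar x ^ 3) / 2) ^ 2 = x ^ 2 * (ustar x ^ 2) ^ 3 / 4 by ring, ustar_sq]
  field_simp
  ring

theorem integral_ustar_pow_six : ∫ x : ℝ, ustar x ^ 6 = 1 := by
  simp_rw [ustar_pow_six]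
  rw [integral_const_mul, integral_inv_sq_add_sq_pow 2 kappa_pos,
    integral_cos_pow_four_neg_pi_div_two, ← kappa_pow_five]
  have := kappa_pos.ne'
  field_simp

theorem integral_ustar_pow_four : ∫ x : ℝ, ustar x ^ 4 = 2 * π / kappa ^ 3 := by
  simp_rw [ustar_pow_four]
  rw [integral_const_mul, integral_inv_sq_add_sq_pow 1 kappa_pos,
    integral_cos_sq_neg_pi_div_two]
  ring

theorem integral_deriv_ustar_sq : ∫ x : ℝ, deriv ustar x ^ 2 = π / (4 * kappa ^ 3) := by
  simp_rw [deriv_ustar_sq]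
  rw [integral_sub ((integrable_inv_sq_add_sq_pow 1 kappa_pos.ne').const_mul _)
      ((integrable_inv_sq_add_sq_pow 2 kappa_pos.ne').const_mul _),
    integral_const_mul, integral_const_mul, integral_inv_sq_add_sq_pow 1 kappa_pos,
    integral_inv_sq_add_sq_pow 2 kappa_pos, integral_cos_sq_neg_pi_div_two,
    integral_cos_pow_four_neg_pi_div_two]
  have := kappa_pos.ne'
  field_simp
  ring

theorem stmt_16 :
    (∫ x : ℝ, (ustar x) ^ 6) = 1 ∧
    (∀ x : ℝ, -(deriv (deriv ustar) x) + (ustar x) ^ 3 - lam * (ustar x) ^ 5 = 0) ∧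
    (1 / 2) * (∫ x : ℝ, (deriv ustar x) ^ 2) + (1 / 4) * (∫ x : ℝ, (ustar x) ^ 4)
      = (5 / 18) * lam := by
  refine ⟨integral_ustar_pow_six, ustar_ode, ?_⟩
  rw [integral_deriv_ustar_sq, integral_ustar_pow_four, lam_eq]
  have := kappa_pos.ne'
  field_simp
  linear_combination (-30 : ℝ) * kappa_pow_five
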